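/- For all integers N ≥ 1 and m ≥ 0, one has the pointwise (almost sure) identity |S_{N,m}(z)|^2 = |E_{N,m}| + ∑_{k=0}^{m} ∑_{a, b ∈ E_{N,k}, gcd(a,b) = 1, a ≠ b} |E_{⌊N/max(a,b)⌋, m−k}| · z(a) · conj(z(b)). -/

import Mathlib

open MeasureTheory ProbabilityTheory

/-- The Steinhaus (uniform) probability measure on the unit circle in `ℂ`,
realized as the pushforward of the normalized Lebesgue measure on `(0, 2π]`
under `t ↦ exp(it)`. -/
noncomputable def steinhausMeasure : Measure ℂ :=
  Measure.map (fun t : ℝ => Complex.exp (t * Complex.I))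
    ((ENNReal.ofReal (2 * Real.pi))⁻¹ • volume.restrict (Set.Ioc 0 (2 * Real.pi)))

/-- `Enm N m` is the set of integers `1 ≤ n ≤ N` with `Ω(n) = m`, where `Ω(n)` is the
number of prime factors of `n` counted with multiplicity. -/
def Enm (N m : ℕ) : Finset ℕ :=
  (Finset.Icc 1 N).filter fun n => n.primeFactorsList.length = m

private lemma mem_Enm {N m n : ℕ} :
    n ∈ Enm N m ↔ (1 ≤ n ∧ n ≤ N) ∧ n.primeFactorsList.length = m := by
  simp [Enm, Finset.mem_filter, Finset.mem_Icc]

private lemma len_mul {a b : ℕ} (ha : a ≠ 0) (hb : b ≠ 0) :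
    (a * b).primeFactorsList.length
      = a.primeFactorsList.length + b.primeFactorsList.length := by
  simpa [ArithmeticFunction.cardFactors_apply] using ArithmeticFunction.cardFactors_mul ha hb

private lemma norm_z_aux {Ω : Type} (z : ℕ → Ω → ℂ)
    (hone : ∀ ω : Ω, z 1 ω = 1)
    (hmul : ∀ ω : Ω, ∀ m n : ℕ, 0 < m → 0 < n → z (m * n) ω = z m ω * z n ω)
    (hcirc : ∀ p : ℕ, p.Prime → ∀ ω : Ω, ‖z p ω‖ = 1) (ω : Ω) :
    ∀ n : ℕ, 0 < n → ‖z n ω‖ = 1 := by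
  intro n
  induction n using Nat.strong_induction_on with
  | _ n ih =>
    intro hn
    rcases eq_or_lt_of_le (show 1 ≤ n from hn) with h1 | h2
    · rw [← h1, hone]; simp
    · have hp := Nat.minFac_prime (show n ≠ 1 by omega)
      have hd : n.minFac ∣ n := Nat.minFac_dvd n
      have hq : 0 < n / n.minFac :=
        Nat.div_pos (Nat.minFac_le (by omega)) (Nat.minFac_pos n)
      have hlt : n / n.minFac < n := Nat.div_lt_self (by omega) hp.one_lt
      have hn' : n = n.minFac * (n / n.minFac) := (Nat.mul_div_cancel' hd).symm
      rw [hn', hmul ω _ _ (Nat.minFac_pos n) hq, norm_mul, hcirc _ hp,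
        ih _ hlt hq, one_mul]

theorem square_modulus_homogeneous_expansion
    {Ω : Type} [MeasureSpace Ω] (hprob : IsProbabilityMeasure (ℙ : Measure Ω))
    (z : ℕ → Ω → ℂ)
    (hmeas : ∀ n : ℕ, Measurable (z n))
    (hone : ∀ ω : Ω, z 1 ω = 1)
    (hmul : ∀ ω : Ω, ∀ m n : ℕ, 0 < m → 0 < n → z (m * n) ω = z m ω * z n ω)
    (hcirc : ∀ p : ℕ, p.Prime → ∀ ω : Ω, ‖z p ω‖ = 1)
    (hindep : iIndepFun
      (fun p : Nat.Primes => z (p : ℕ)) ℙ)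
    (hunif : ∀ p : ℕ, p.Prime → Measure.map (z p) ℙ = steinhausMeasure) :
    ∀ N : ℕ, 1 ≤ N → ∀ m : ℕ, ∀ ω : Ω,
      ((‖∑ n ∈ Enm N m, z n ω‖ ^ 2 : ℝ) : ℂ) =
        ((Enm N m).card : ℂ) +
          ∑ k ∈ Finset.range (m + 1),
            ∑ ab ∈ (Enm N k ×ˢ Enm N k).filter
                (fun ab => Nat.gcd ab.1 ab.2 = 1 ∧ ab.1 ≠ ab.2),
              ((Enm (N / max ab.1 ab.2) (m - k)).card : ℂ) *
                (z ab.1 ω * starRingEnd ℂ (z ab.2 ω)) := by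
  intro N hN m ω
  classical
  have hnorm : ∀ n : ℕ, 0 < n → ‖z n ω‖ = 1 := norm_z_aux z hone hmul hcirc ω
  have hconj : ∀ g : ℕ, 0 < g → z g ω * starRingEnd ℂ (z g ω) = 1 := by
    intro g hg
    rw [Complex.mul_conj]
    have h1 : Complex.normSq (z g ω) = 1 := by
      rw [Complex.normSq_eq_norm_sq, hnorm g hg]; norm_num
    rw [h1]; norm_num
  -- Step 1: |S|^2 as a double sum over the product
  have step1 : ((‖∑ n ∈ Enm N m, z n ω‖ ^ 2 : ℝ) : ℂ)
      = ∑ p ∈ (Enm N m) ×ˢ (Enm N m), z p.1 ω * starRingEnd ℂ (z p.2 ω) := by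
    have h0 : ((‖∑ n ∈ Enm N m, z n ω‖ ^ 2 : ℝ) : ℂ)
        = (∑ n ∈ Enm N m, z n ω) * starRingEnd ℂ (∑ n ∈ Enm N m, z n ω) := by
      rw [Complex.mul_conj]
      norm_cast
      exact (Complex.normSq_eq_norm_sq _).symm
    rw [h0, map_sum, Finset.sum_mul_sum, ← Finset.sum_product']
  -- the big sigma index set
  -- off-diagonal sum equals sum over T
  have hoff : ∑ p ∈ (Enm N m).offDiag, z p.1 ω * starRingEnd ℂ (z p.2 ω)
      = ∑ x ∈ (Finset.range (m + 1)).sigma (fun k =>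
      (((Enm N k ×ˢ Enm N k).filter
          (fun ab => Nat.gcd ab.1 ab.2 = 1 ∧ ab.1 ≠ ab.2)).sigma
        (fun ab => Enm (N / max ab.1 ab.2) (m - k)))), z x.2.1.1 ω * starRingEnd ℂ (z x.2.1.2 ω) := by
    refine Finset.sum_bij'
      (fun p _ => (⟨(p.1 / p.1.gcd p.2).primeFactorsList.length,
        ⟨(p.1 / p.1.gcd p.2, p.2 / p.1.gcd p.2), p.1.gcd p.2⟩⟩ :
          (_ : ℕ) × (_ : ℕ × ℕ) × ℕ))
      (fun x _ => (x.2.2 * x.2.1.1, x.2.2 * x.2.1.2)) ?_ ?_ ?_ ?_ ?_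
    · -- hi : image in T
      rintro ⟨a, b⟩ hp
      rw [Finset.mem_offDiag] at hp
      obtain ⟨hpa, hpb, hne⟩ := hp
      obtain ⟨⟨ha1, haN⟩, hLa⟩ := mem_Enm.mp hpa
      obtain ⟨⟨hb1, hbN⟩, hLb⟩ := mem_Enm.mp hpb
      have hg : 0 < a.gcd b := Nat.gcd_pos_of_pos_left b ha1
      have hga : a.gcd b ∣ a := Nat.gcd_dvd_left a b
      have hgb : a.gcd b ∣ b := Nat.gcd_dvd_right a b
      have haa : a.gcd b * (a / a.gcd b) = a := Nat.mul_div_cancel' hga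
      have hbb : a.gcd b * (b / a.gcd b) = b := Nat.mul_div_cancel' hgb
      have ha' : 0 < a / a.gcd b := Nat.div_pos (Nat.le_of_dvd ha1 hga) hg
      have hb' : 0 < b / a.gcd b := Nat.div_pos (Nat.le_of_dvd hb1 hgb) hg
      have hLs : (a.gcd b).primeFactorsList.length
          + (a / a.gcd b).primeFactorsList.length = m := by
        rw [← len_mul hg.ne' ha'.ne', haa] at *
        exact hLa
      have hLs' : (a.gcd b).primeFactorsList.length
          + (b / a.gcd b).primeFactorsList.length = m := by
        rw [← len_mul hg.ne' hb'.ne', hbb] at *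
        exact hLb
      have hcop : (a / a.gcd b).gcd (b / a.gcd b) = 1 :=
        Nat.coprime_div_gcd_div_gcd hg
      have hne' : a / a.gcd b ≠ b / a.gcd b := by
        intro h
        apply hne
        show a = b
        calc a = a.gcd b * (a / a.gcd b) := haa.symm
          _ = a.gcd b * (b / a.gcd b) := by rw [h]
          _ = b := hbb
      simp only [Finset.mem_sigma, Finset.mem_range, Finset.mem_filter,
        Finset.mem_product]
      refine ⟨by omega, ⟨⟨mem_Enm.mpr ⟨⟨ha', le_trans (Nat.div_le_self _ _) haN⟩, rfl⟩,
        mem_Enm.mpr ⟨⟨hb', le_trans (Nat.div_le_self _ _) hbN⟩, by omega⟩⟩, hcop, hne'⟩,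
        mem_Enm.mpr ⟨⟨hg, ?_⟩, by omega⟩⟩
      -- g ≤ N / max a' b'
      rw [Nat.le_div_iff_mul_le (by positivity : 0 < max (a / a.gcd b) (b / a.gcd b))]
      rcases le_total (a / a.gcd b) (b / a.gcd b) with h | h
      · rw [max_eq_right h, hbb]; exact hbN
      · rw [max_eq_left h, haa]; exact haN
    · -- hj : image in offDiag
      rintro ⟨k, ⟨a, b⟩, g⟩ hx
      dsimp only at hx ⊢
      simp only [Finset.mem_sigma, Finset.mem_range, Finset.mem_filter,
        Finset.mem_product] at hx
      obtain ⟨hk, ⟨⟨haE, hbE⟩, hcop, hne⟩, hgE⟩ := hx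
      obtain ⟨⟨ha1, haN⟩, hLa⟩ := mem_Enm.mp haE
      obtain ⟨⟨hb1, hbN⟩, hLb⟩ := mem_Enm.mp hbE
      obtain ⟨⟨hg1, hgN⟩, hLg⟩ := mem_Enm.mp hgE
      have hg0 : g ≠ 0 := by omega
      have ha0 : a ≠ 0 := by omega
      have hb0 : b ≠ 0 := by omega
      have hk' : k ≤ m := by omega
      have hmax : 0 < max a b := lt_of_lt_of_le ha1 (le_max_left a b)
      have hgmax : g * max a b ≤ N := (Nat.le_div_iff_mul_le hmax).mp hgN
      rw [Finset.mem_offDiag]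
      refine ⟨mem_Enm.mpr ⟨⟨Nat.mul_pos hg1 ha1,
          le_trans (mul_le_mul_right (le_max_left a b) g) hgmax⟩, ?_⟩,
        mem_Enm.mpr ⟨⟨Nat.mul_pos hg1 hb1,
          le_trans (mul_le_mul_right (le_max_right a b) g) hgmax⟩, ?_⟩, ?_⟩
      · rw [len_mul hg0 ha0]; omega
      · rw [len_mul hg0 hb0]; omega
      · intro h
        exact hne (Nat.eq_of_mul_eq_mul_left hg1 h)
    · -- left_inv
      rintro ⟨a, b⟩ hp
      rw [Finset.mem_offDiag] at hp
      obtain ⟨hpa, hpb, hne⟩ := hp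
      have ha1 : 0 < a := (mem_Enm.mp hpa).1.1
      have hga : a.gcd b ∣ a := Nat.gcd_dvd_left a b
      have hgb : a.gcd b ∣ b := Nat.gcd_dvd_right a b
      simp only
      exact Prod.ext (Nat.mul_div_cancel' hga) (Nat.mul_div_cancel' hgb)
    · -- right_inv
      rintro ⟨k, ⟨a, b⟩, g⟩ hx
      dsimp only at hx ⊢
      simp only [Finset.mem_sigma, Finset.mem_range, Finset.mem_filter,
        Finset.mem_product] at hx
      obtain ⟨hk, ⟨⟨haE, hbE⟩, hcop, hne⟩, hgE⟩ := hx
      have hLa : a.primeFactorsList.length = k := (mem_Enm.mp haE).2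
      have hg1 : 0 < g := (mem_Enm.mp hgE).1.1
      have hG : (g * a).gcd (g * b) = g := by
        rw [Nat.gcd_mul_left, hcop, mul_one]
      simp only [hG, Nat.mul_div_cancel_left _ hg1, hLa]
    · -- values agree
      rintro ⟨a, b⟩ hp
      rw [Finset.mem_offDiag] at hp
      obtain ⟨hpa, hpb, hne⟩ := hp
      have ha1 : 0 < a := (mem_Enm.mp hpa).1.1
      have hb1 : 0 < b := (mem_Enm.mp hpb).1.1
      have hg : 0 < a.gcd b := Nat.gcd_pos_of_pos_left b ha1
      have hga : a.gcd b ∣ a := Nat.gcd_dvd_left a b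
      have hgb : a.gcd b ∣ b := Nat.gcd_dvd_right a b
      have haa : a.gcd b * (a / a.gcd b) = a := Nat.mul_div_cancel' hga
      have hbb : a.gcd b * (b / a.gcd b) = b := Nat.mul_div_cancel' hgb
      have ha' : 0 < a / a.gcd b := Nat.div_pos (Nat.le_of_dvd ha1 hga) hg
      have hb' : 0 < b / a.gcd b := Nat.div_pos (Nat.le_of_dvd hb1 hgb) hg
      have e1 : z a ω = z (a.gcd b) ω * z (a / a.gcd b) ω := by
        rw [← hmul ω _ _ hg ha', haa]
      have e2 : z b ω = z (a.gcd b) ω * z (b / a.gcd b) ω := by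
        rw [← hmul ω _ _ hg hb', hbb]
      simp only
      calc z a ω * starRingEnd ℂ (z b ω)
          = (z (a.gcd b) ω * starRingEnd ℂ (z (a.gcd b) ω))
            * (z (a / a.gcd b) ω * starRingEnd ℂ (z (b / a.gcd b) ω)) := by
            rw [e1, e2, map_mul]; ring
        _ = z (a / a.gcd b) ω * starRingEnd ℂ (z (b / a.gcd b) ω) := by
            rw [hconj _ hg, one_mul]
  -- sum over T equals the RHS double sum
  have hrhs : ∑ x ∈ (Finset.range (m + 1)).sigma (fun k =>
      (((Enm N k ×ˢ Enm N k).filter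
          (fun ab => Nat.gcd ab.1 ab.2 = 1 ∧ ab.1 ≠ ab.2)).sigma
        (fun ab => Enm (N / max ab.1 ab.2) (m - k)))), z x.2.1.1 ω * starRingEnd ℂ (z x.2.1.2 ω)
      = ∑ k ∈ Finset.range (m + 1),
          ∑ ab ∈ (Enm N k ×ˢ Enm N k).filter
              (fun ab => Nat.gcd ab.1 ab.2 = 1 ∧ ab.1 ≠ ab.2),
            ((Enm (N / max ab.1 ab.2) (m - k)).card : ℂ) *
              (z ab.1 ω * starRingEnd ℂ (z ab.2 ω)) := by
    rw [Finset.sum_sigma]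
    refine Finset.sum_congr rfl fun k _ => ?_
    rw [Finset.sum_sigma]
    refine Finset.sum_congr rfl fun ab _ => ?_
    dsimp only
    rw [Finset.sum_const, nsmul_eq_mul]
  -- diagonal
  have hdiag : ∑ p ∈ (Enm N m).diag, z p.1 ω * starRingEnd ℂ (z p.2 ω)
      = ((Enm N m).card : ℂ) := by
    have h1 : ∀ p ∈ (Enm N m).diag, z p.1 ω * starRingEnd ℂ (z p.2 ω) = 1 := by
      intro p hp
      rw [Finset.mem_diag] at hp
      have hp1 : 0 < p.1 := (mem_Enm.mp hp.1).1.1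
      rw [← hp.2]
      exact hconj _ hp1
    rw [Finset.sum_congr rfl h1, Finset.sum_const, Finset.diag_card, nsmul_eq_mul, mul_one]
  calc ((‖∑ n ∈ Enm N m, z n ω‖ ^ 2 : ℝ) : ℂ)
      = ∑ p ∈ (Enm N m) ×ˢ (Enm N m), z p.1 ω * starRingEnd ℂ (z p.2 ω) := step1
    _ = (∑ p ∈ (Enm N m).diag, z p.1 ω * starRingEnd ℂ (z p.2 ω))
        + ∑ p ∈ (Enm N m).offDiag, z p.1 ω * starRingEnd ℂ (z p.2 ω) := by
        rw [← Finset.diag_union_offDiag, Finset.sum_union (Finset.disjoint_diag_offDiag _)]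
    _ = _ := by rw [hdiag, hoff, hrhs]
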